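/- Let S be a set equipped with two metrics m and m′, inducing topologies τ and τ′ respectively, such that τ′ is coarser than τ and every open m-ball is a Borel set for τ′. Let S₀ ⊆ S be a set such that whenever a sequence converges in τ′ to a point of S₀, it also converges in τ to that point. Suppose Xₙ : Ω → S converges in distribution (in the Hoffmann–Jørgensen sense) with respect to τ′ to a map X : Ω → S that is Borel measurable with respect to τ and takes all its values in S₀. Then Xₙ converges in distribution (in the Hoffmann–Jørgensen sense) to X with respect to τ. -/

import Mathlib

/-!
Approximate a bounded `m`-continuous `f` from above by its `m'`-Lipschitz majorants
`f_k x = ⨆ y, f y - k * m'.dist x y`. Each `f_k` is `m'`-continuous (hence also `m`-Borel, `τ'`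
being coarser), so `E* f(Xₙ) ≤ E* f_k(Xₙ) → E f_k(Y)`. On `S₀` the hypothesis on sequences makes
`f` `m'`-continuous, so `f_k(Y) → f(Y)` pointwise and dominated convergence gives
`limsup E* f(Xₙ) ≤ E f(Y)`. Applied to `-f`, together with `E* ξ ≥ -E* (-ξ)`, this yields the
matching lower bound.
-/

open MeasureTheory Filter Set Topology

/-- The outer expectation `E* ξ`: the infimum of `E ζ` over all integrable random
variables `ζ ≥ ξ` almost surely. -/
noncomputable def outerExp {Ω : Type*} [MeasurableSpace Ω] (μ : Measure Ω)
    (ξ : Ω → ℝ) : ℝ :=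
  sInf {c : ℝ | ∃ ζ : Ω → ℝ, Measurable ζ ∧ Integrable ζ μ ∧
    (∀ᵐ ω ∂μ, ξ ω ≤ ζ ω) ∧ c = ∫ ω, ζ ω ∂μ}

/-- Hoffmann–Jørgensen convergence in distribution with respect to an explicitly
given topology `τ` on `S`: `E* f(Xₙ) → E f(Y)` for every `τ`-continuous bounded `f`. -/
def TendstoInDistHJ {Ω S : Type*} [MeasurableSpace Ω] (τ : TopologicalSpace S)
    (μ : Measure Ω) (X : ℕ → Ω → S) (Y : Ω → S) : Prop :=
  ∀ f : S → ℝ, Continuous[τ, _] f → (∃ C : ℝ, ∀ x : S, |f x| ≤ C) →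
    Tendsto (fun n => outerExp μ fun ω => f (X n ω)) atTop
      (nhds (∫ ω, f (Y ω) ∂μ))

/-- The topology induced by a metric. -/
def metricTopology {S : Type*} (m : MetricSpace S) : TopologicalSpace S :=
  m.toPseudoMetricSpace.toUniformSpace.toTopologicalSpace

section LipschitzMajorant

variable {S : Type*} [PseudoMetricSpace S] {f : S → ℝ} {C : ℝ}

/-- The Pasch–Hausdorff envelope: the least `k`-Lipschitz function above `f`. -/
noncomputable def lipschitzMajorant (f : S → ℝ) (k : ℕ) (x : S) : ℝ :=
  ⨆ y, f y - k * dist x y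

lemma sub_mul_dist_le (hC : ∀ y, f y ≤ C) (k : ℕ) (x y : S) : f y - k * dist x y ≤ C :=
  (sub_le_self _ (by positivity)).trans (hC y)

lemma bddAbove_range_sub_mul_dist (hC : ∀ y, f y ≤ C) (k : ℕ) (x : S) :
    BddAbove (range fun y => f y - k * dist x y) :=
  ⟨C, forall_mem_range.2 (sub_mul_dist_le hC k x)⟩

lemma le_lipschitzMajorant (hC : ∀ y, f y ≤ C) (k : ℕ) (x : S) :
    f x ≤ lipschitzMajorant f k x := by
  simpa [lipschitzMajorant] using le_ciSup (bddAbove_range_sub_mul_dist hC k x) x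

lemma lipschitzMajorant_le (hC : ∀ y, f y ≤ C) (k : ℕ) (x : S) :
    lipschitzMajorant f k x ≤ C :=
  have : Nonempty S := ⟨x⟩
  ciSup_le (sub_mul_dist_le hC k x)

lemma lipschitzWith_lipschitzMajorant (hC : ∀ y, f y ≤ C) (k : ℕ) :
    LipschitzWith k (lipschitzMajorant f k) := by
  refine LipschitzWith.of_le_add_mul _ fun x x' => ?_
  have : Nonempty S := ⟨x⟩
  refine ciSup_le fun y => ?_
  have hy : f y - k * dist x' y ≤ lipschitzMajorant f k x' :=
    le_ciSup (bddAbove_range_sub_mul_dist hC k x') y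
  have htri : (k : ℝ) * dist x' y ≤ k * (dist x x' + dist x y) := by
    gcongr
    exact dist_triangle_left x' y x
  push_cast
  linarith

lemma tendsto_lipschitzMajorant (hC : ∀ y, f y ≤ C) {x : S} (hx : ContinuousAt f x) :
    Tendsto (fun k => lipschitzMajorant f k x) atTop (𝓝 (f x)) := by
  refine tendsto_order.2 ⟨fun a ha => .of_forall fun k => ha.trans_le
    (le_lipschitzMajorant hC k x), fun b hb => ?_⟩
  obtain ⟨b', hxb', hb'b⟩ := exists_between hb
  obtain ⟨δ, hδ, hnear⟩ := Metric.eventually_nhds_iff.1 (hx.eventually (gt_mem_nhds hxb'))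
  obtain ⟨K, hK⟩ := exists_nat_ge ((C - b') / δ)
  filter_upwards [eventually_ge_atTop K] with k hk
  have : Nonempty S := ⟨x⟩
  refine (ciSup_le fun y => ?_).trans_lt hb'b
  rcases lt_or_ge (dist y x) δ with hyx | hyx
  · have := hnear hyx
    have : 0 ≤ (k : ℝ) * dist x y := by positivity
    linarith
  · have hKk : (C - b') / δ ≤ k := hK.trans (Nat.cast_le.2 hk)
    rw [div_le_iff₀ hδ] at hKk
    have : (k : ℝ) * δ ≤ k * dist x y := by rw [dist_comm]; gcongr
    linarith [hC y]

lemma abs_lipschitzMajorant_le (hC : ∀ x, |f x| ≤ C) (k : ℕ) (x : S) :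
    |lipschitzMajorant f k x| ≤ C := by
  have hC' : ∀ y, f y ≤ C := fun y => (abs_le.1 (hC y)).2
  exact abs_le.2 ⟨(abs_le.1 (hC x)).1.trans (le_lipschitzMajorant hC' k x),
    lipschitzMajorant_le hC' k x⟩

end LipschitzMajorant

section OuterExp

variable {Ω : Type*} [MeasurableSpace Ω] (μ : Measure Ω) [IsFiniteMeasure μ]

lemma integral_const_mem_outerExp_set {ξ : Ω → ℝ} {b : ℝ} (hb : ∀ ω, ξ ω ≤ b) :
    ∫ _, b ∂μ ∈ {c : ℝ | ∃ ζ : Ω → ℝ, Measurable ζ ∧ Integrable ζ μ ∧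
      (∀ᵐ ω ∂μ, ξ ω ≤ ζ ω) ∧ c = ∫ ω, ζ ω ∂μ} :=
  ⟨fun _ => b, measurable_const, integrable_const b, ae_of_all μ hb, rfl⟩

lemma bddBelow_outerExp_set {ξ : Ω → ℝ} {a : ℝ} (ha : ∀ ω, a ≤ ξ ω) :
    BddBelow {c : ℝ | ∃ ζ : Ω → ℝ, Measurable ζ ∧ Integrable ζ μ ∧
      (∀ᵐ ω ∂μ, ξ ω ≤ ζ ω) ∧ c = ∫ ω, ζ ω ∂μ} := by
  refine ⟨∫ _, a ∂μ, ?_⟩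
  rintro _ ⟨ζ, -, hζ, hξζ, rfl⟩
  exact integral_mono_ae (integrable_const a) hζ (hξζ.mono fun ω h => (ha ω).trans h)

lemma outerExp_mono {ξ ξ' : Ω → ℝ} {a b : ℝ} (ha : ∀ ω, a ≤ ξ ω) (hb : ∀ ω, ξ' ω ≤ b)
    (h : ξ ≤ ξ') : outerExp μ ξ ≤ outerExp μ ξ' := by
  refine csInf_le_csInf (bddBelow_outerExp_set μ ha) ⟨_, integral_const_mem_outerExp_set μ hb⟩ ?_
  rintro c ⟨ζ, hm, hi, hξ'ζ, rfl⟩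
  exact ⟨ζ, hm, hi, hξ'ζ.mono fun ω => (h ω).trans, rfl⟩

lemma neg_outerExp_neg_le {ξ : Ω → ℝ} {a b : ℝ} (ha : ∀ ω, a ≤ ξ ω) (hb : ∀ ω, ξ ω ≤ b) :
    -outerExp μ (fun ω => -ξ ω) ≤ outerExp μ ξ := by
  refine le_csInf ⟨_, integral_const_mem_outerExp_set μ hb⟩ ?_
  rintro _ ⟨ζ, -, hζ, hξζ, rfl⟩
  rw [neg_le]
  refine le_csInf ⟨_, integral_const_mem_outerExp_set μ fun ω => neg_le_neg (ha ω)⟩ ?_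
  rintro _ ⟨ζ', -, hζ', hξζ', rfl⟩
  have : 0 ≤ ∫ ω, (ζ ω + ζ' ω) ∂μ := integral_nonneg_of_ae <| by
    filter_upwards [hξζ, hξζ'] with ω h h'
    simp only [Pi.zero_apply]
    linarith
  rw [integral_add hζ hζ'] at this
  linarith

lemma tendsto_outerExp_of_forall_eventually_le {ξ : ℕ → Ω → ℝ} {a b l : ℝ}
    (ha : ∀ n ω, a ≤ ξ n ω) (hb : ∀ n ω, ξ n ω ≤ b)
    (hup : ∀ ε > 0, ∀ᶠ n in atTop, outerExp μ (ξ n) ≤ l + ε)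
    (hdown : ∀ ε > 0, ∀ᶠ n in atTop, outerExp μ (fun ω => -ξ n ω) ≤ -l + ε) :
    Tendsto (fun n => outerExp μ (ξ n)) atTop (𝓝 l) := by
  refine tendsto_order.2 ⟨fun c hc => ?_, fun c hc => ?_⟩
  · filter_upwards [hdown ((l - c) / 2) (by linarith)] with n hn
    linarith [neg_outerExp_neg_le μ (ha n) (hb n)]
  · filter_upwards [hup ((c - l) / 2) (by linarith)] with n hn
    linarith

end OuterExp

section Portmanteau

variable {Ω S : Type*} [MeasurableSpace Ω] {μ : Measure Ω} [IsFiniteMeasure μ]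
  [PseudoMetricSpace S] [MeasurableSpace S] [OpensMeasurableSpace S]
  {X : ℕ → Ω → S} {Y : Ω → S} {g : S → ℝ} {C : ℝ}

lemma tendsto_integral_lipschitzMajorant (hY : Measurable Y) (hC : ∀ x, |g x| ≤ C)
    (hgY : ∀ ω, ContinuousAt g (Y ω)) :
    Tendsto (fun k => ∫ ω, lipschitzMajorant g k (Y ω) ∂μ) atTop (𝓝 (∫ ω, g (Y ω) ∂μ)) := by
  have hC' : ∀ y, g y ≤ C := fun y => (abs_le.1 (hC y)).2
  refine tendsto_integral_of_dominated_convergence (fun _ => C) (fun k => ?_)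
    (integrable_const C) (fun k => ae_of_all μ fun ω => abs_lipschitzMajorant_le hC k _)
    (ae_of_all μ fun ω => tendsto_lipschitzMajorant hC' (hgY ω))
  exact ((lipschitzWith_lipschitzMajorant hC' k).continuous.measurable.comp hY).aestronglyMeasurable

lemma eventually_outerExp_le_integral_add (hY : Measurable Y)
    (hXY : TendstoInDistHJ inferInstance μ X Y) (hC : ∀ x, |g x| ≤ C)
    (hgY : ∀ ω, ContinuousAt g (Y ω)) {ε : ℝ} (hε : 0 < ε) :
    ∀ᶠ n in atTop, outerExp μ (fun ω => g (X n ω)) ≤ ∫ ω, g (Y ω) ∂μ + ε := by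
  have hC' : ∀ y, g y ≤ C := fun y => (abs_le.1 (hC y)).2
  obtain ⟨k, hk⟩ := ((tendsto_integral_lipschitzMajorant hY hC hgY).eventually_lt_const
    (lt_add_of_pos_right (∫ ω, g (Y ω) ∂μ) hε)).exists
  have hXk := hXY _ (lipschitzWith_lipschitzMajorant hC' k).continuous
    ⟨C, abs_lipschitzMajorant_le hC k⟩
  filter_upwards [hXk.eventually_lt_const hk] with n hn
  refine le_trans ?_ hn.le
  exact outerExp_mono μ (fun ω => (abs_le.1 (hC _)).1)
    (fun ω => (abs_le.1 (abs_lipschitzMajorant_le hC k _)).2)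
    fun ω => le_lipschitzMajorant hC' k _

end Portmanteau

theorem tendstoInDistHJ_of_coarser_general
    {Ω S : Type*} [MeasurableSpace Ω] (μ : Measure Ω) [IsProbabilityMeasure μ]
    (m m' : MetricSpace S)
    (hcoarser : ∀ s : Set S,
      IsOpen[metricTopology m'] s → IsOpen[metricTopology m] s)
    (S₀ : Set S)
    (hS₀ : ∀ (u : ℕ → S) (x : S), x ∈ S₀ →
      Tendsto u atTop (@nhds S (metricTopology m') x) →
      Tendsto u atTop (@nhds S (metricTopology m) x))
    (X : ℕ → Ω → S) (Y : Ω → S)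
    (hY : @Measurable Ω S _ (@borel S (metricTopology m)) Y)
    (hrange : ∀ ω, Y ω ∈ S₀)
    (hXY : TendstoInDistHJ (metricTopology m') μ X Y) :
    TendstoInDistHJ (metricTopology m) μ X Y := by
  let _ : PseudoMetricSpace S := m'.toPseudoMetricSpace
  let _ : MeasurableSpace S := @borel S (metricTopology m)
  have : OpensMeasurableSpace S := ⟨@borel_anti S _ _ hcoarser⟩
  rintro f hf ⟨C, hC⟩
  have hfY : ∀ ω, ContinuousAt f (Y ω) := fun ω => tendsto_nhds_iff_seq_tendsto.2 fun u hu =>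
    (@Continuous.tendsto _ _ (metricTopology m) _ f hf (Y ω)).comp (hS₀ u _ (hrange ω) hu)
  refine tendsto_outerExp_of_forall_eventually_le μ (ξ := fun n ω => f (X n ω))
    (fun n ω => (abs_le.1 (hC _)).1) (fun n ω => (abs_le.1 (hC _)).2)
    (fun ε hε => eventually_outerExp_le_integral_add hY hXY hC hfY hε) fun ε hε => ?_
  have := eventually_outerExp_le_integral_add (g := -f) hY hXY (by simpa using hC)
    (fun ω => (hfY ω).neg) hε
  simpa only [Pi.neg_apply, integral_neg] using this

/-- Convergence in distribution for a coarser metric topology upgrades to the finer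
topology when the limit takes values in a set on which the two notions of sequential
convergence agree (Corollary D.1). -/
theorem tendstoInDistHJ_of_coarser
    {Ω S : Type*} [MeasurableSpace Ω] (μ : Measure Ω) [IsProbabilityMeasure μ]
    (m m' : MetricSpace S)
    (hcoarser : ∀ s : Set S,
      IsOpen[metricTopology m'] s → IsOpen[metricTopology m] s)
    (hballs : ∀ (c : S) (r : ℝ),
      MeasurableSet[@borel S (metricTopology m')] (@Metric.ball S m.toPseudoMetricSpace c r))
    (S₀ : Set S)
    (hS₀ : ∀ (u : ℕ → S) (x : S), x ∈ S₀ →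
      Tendsto u atTop (@nhds S (metricTopology m') x) →
      Tendsto u atTop (@nhds S (metricTopology m) x))
    (X : ℕ → Ω → S) (Y : Ω → S)
    (hY : @Measurable Ω S _ (@borel S (metricTopology m)) Y)
    (hrange : ∀ ω, Y ω ∈ S₀)
    (hXY : TendstoInDistHJ (metricTopology m') μ X Y) :
    TendstoInDistHJ (metricTopology m) μ X Y :=
  tendstoInDistHJ_of_coarser_general μ m m' hcoarser S₀ hS₀ X Y hY hrange hXY
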